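/- arXiv:1408.3330 — 2 statements merged into one kernel-verified Lean document; each statement's English description precedes it below -/
import Mathlib

section
/- Let k be a field of characteristic 0 equipped with a multiplicative nonarchimedean norm, and let δ > 0 be a real number. Consider the k-vector space B of sequences a : ℤ → k that are overconvergent on the punctured disk of radius δ, and its subspace D' consisting of the derivatives of elements of B. Then the quotient B / D' is a one-dimensional k-vector space, spanned by the class of the sequence e with e_{-1} = 1 and eₙ = 0 for n ≠ -1 (the class of T⁻¹). (The first de Rham cohomology of the overconvergent punctured disk of radius δ is one-dimensional; compare the Gysin sequence for the inclusion of the origin into the dagger disk.) -/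
/-!
STATEMENT 7: Over a nonarchimedean normed field `k` of characteristic zero, the
quotient `B / D'` of the space `B` of Laurent series overconvergent on the punctured
disk of radius `δ` by the subspace `D'` of derivatives of elements of `B` is one
dimensional, spanned by the class of `T⁻¹` (the sequence `e` with `e₋₁ = 1` and
`eₙ = 0` otherwise).  This is stated as: (i) `e ∈ B`; (ii) the class of `e` is
nonzero, i.e. `e` is not the derivative of any element of `B`; (iii) the class of
`e` spans, i.e. every `a ∈ B` differs from a scalar multiple of `e` by the
derivative of an element of `B`.
-/

/-- `a : ℤ → k` (encoding the Laurent series `Σ aₙ Tⁿ`) is overconvergent on the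
punctured disk of radius `δ`. -/
def IsOvercgtOnPuncturedDisk {k : Type*} [NormedField k] (δ : ℝ) (a : ℤ → k) : Prop :=
  ∃ δ' : ℝ, δ < δ' ∧ ∀ ρ : ℝ, 0 < ρ → ρ < δ' →
    Filter.Tendsto (fun n : ℤ => ‖a n‖ * ρ ^ n) Filter.atTop (nhds 0) ∧
    Filter.Tendsto (fun n : ℤ => ‖a n‖ * ρ ^ n) Filter.atBot (nhds 0)


section AuxLemmas

section aux
variable {k : Type*} [NormedField k]

lemma natNorm_le_one (hna : ∀ x y : k, ‖x + y‖ ≤ max ‖x‖ ‖y‖) :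
    ∀ n : ℕ, ‖(n : k)‖ ≤ 1 := by
  intro n
  induction n with
  | zero => simp
  | succ m ih =>
      push_cast
      refine (hna _ _).trans ?_
      simp [ih]

lemma intNorm_le_one (hna : ∀ x y : k, ‖x + y‖ ≤ max ‖x‖ ‖y‖) :
    ∀ n : ℤ, ‖(n : k)‖ ≤ 1 := by
  intro n
  rcases Int.natAbs_eq n with h | h
  · rw [h, Int.cast_natCast]; exact natNorm_le_one hna _
  · rw [h, Int.cast_neg, Int.cast_natCast, norm_neg]; exact natNorm_le_one hna _

lemma exists_special_prime [CharZero k] (hna : ∀ x y : k, ‖x + y‖ ≤ max ‖x‖ ‖y‖) :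
    ∃ p : ℕ, 2 ≤ p ∧ ∀ q : ℕ, q.Prime → ‖(q : k)‖ = 1 ∨ q = p := by
  by_cases h : ∃ p : ℕ, p.Prime ∧ ‖(p : k)‖ < 1
  · obtain ⟨p, hp, hplt⟩ := h
    refine ⟨p, hp.two_le, fun q hq => ?_⟩
    by_cases hqp : q = p
    · exact Or.inr hqp
    · left
      refine le_antisymm (natNorm_le_one hna q) ?_
      by_contra hlt
      push_neg at hlt
      have hcop : IsCoprime (q : ℤ) (p : ℤ) :=
        Nat.isCoprime_iff_coprime.mpr ((Nat.coprime_primes hq hp).mpr hqp)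
      obtain ⟨u, v, huv⟩ := hcop
      have hk : (u : k) * (q : k) + (v : k) * (p : k) = 1 := by
        have := congrArg (fun z : ℤ => (z : k)) huv
        push_cast at this
        simpa using this
      have h1 : (1 : ℝ) ≤ max (‖(u : k) * (q : k)‖) (‖(v : k) * (p : k)‖) := by
        calc (1 : ℝ) = ‖(1 : k)‖ := by simp
          _ = ‖(u : k) * (q : k) + (v : k) * (p : k)‖ := by rw [hk]
          _ ≤ _ := hna _ _
      have hu : ‖(u : k) * (q : k)‖ < 1 := by
        rw [norm_mul]
        calc ‖(u : k)‖ * ‖(q : k)‖ ≤ 1 * ‖(q : k)‖ :=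
              mul_le_mul_of_nonneg_right (intNorm_le_one hna u) (norm_nonneg _)
          _ < 1 := by simpa using hlt
      have hv : ‖(v : k) * (p : k)‖ < 1 := by
        rw [norm_mul]
        calc ‖(v : k)‖ * ‖(p : k)‖ ≤ 1 * ‖(p : k)‖ :=
              mul_le_mul_of_nonneg_right (intNorm_le_one hna v) (norm_nonneg _)
          _ < 1 := by simpa using hplt
      have := max_lt hu hv
      linarith
  · push_neg at h
    refine ⟨2, le_refl 2, fun q hq => Or.inl (le_antisymm (natNorm_le_one hna q) (h q hq))⟩

lemma exists_K [CharZero k] (hna : ∀ x y : k, ‖x + y‖ ≤ max ‖x‖ ‖y‖) :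
    ∃ K : ℕ, ∀ n : ℕ, 1 ≤ n → 1 ≤ ‖(n : k)‖ * (n : ℝ) ^ K := by
  obtain ⟨p, hp2, hpq⟩ := exists_special_prime hna
  set c := ‖(p : k)‖ with hc
  have hp0 : (p : k) ≠ 0 := Nat.cast_ne_zero.mpr (by omega)
  have hc0 : 0 < c := norm_pos_iff.mpr hp0
  obtain ⟨K, hK⟩ : ∃ K : ℕ, c⁻¹ ≤ (2 : ℝ) ^ K :=
    (pow_unbounded_of_one_lt c⁻¹ one_lt_two).imp fun K h => h.le
  have h2K : 1 ≤ c * 2 ^ K := by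
    rw [inv_le_iff_one_le_mul₀ hc0] at hK
    linarith [hK]
  refine ⟨K, ?_⟩
  intro n
  induction n using Nat.strong_induction_on with
  | _ n ih =>
    intro hn1
    rcases eq_or_lt_of_le hn1 with h1 | h2
    · simp [← h1]
    · obtain ⟨q, hq, hdvd⟩ := Nat.exists_prime_and_dvd (show n ≠ 1 by omega)
      obtain ⟨m, rfl⟩ := hdvd
      have hm1 : 1 ≤ m := by
        rcases Nat.eq_zero_or_pos m with h | h
        · subst h; simp at h2
        · exact h
      have hmlt : m < q * m := by nlinarith [hq.two_le, hm1]
      have ihm := ih m hmlt hm1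
      have hnorm : ‖((q * m : ℕ) : k)‖ = ‖(q : k)‖ * ‖(m : k)‖ := by
        push_cast; rw [norm_mul]
      have hcast : ((q * m : ℕ) : ℝ) ^ K = (q : ℝ) ^ K * (m : ℝ) ^ K := by
        push_cast; ring
      rw [hnorm, hcast]
      have hmK : (0 : ℝ) ≤ (m : ℝ) ^ K := by positivity
      have hmn : (0 : ℝ) ≤ ‖(m : k)‖ := norm_nonneg _
      rcases hpq q hq with hq1 | rfl
      · have hqK : (1 : ℝ) ≤ (q : ℝ) ^ K := one_le_pow₀ (by exact_mod_cast hq.one_le)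
        rw [hq1]
        nlinarith
      · have hqK : (2 : ℝ) ^ K ≤ (q : ℝ) ^ K := by
          apply pow_le_pow_left₀ (by norm_num)
          exact_mod_cast hq.two_le
        have h1 : (1 : ℝ) ≤ ‖(q : k)‖ * (q : ℝ) ^ K :=
          le_trans h2K (mul_le_mul_of_nonneg_left hqK hc0.le)
        nlinarith [mul_le_mul h1 ihm zero_le_one (le_trans zero_le_one h1)]

end aux

lemma exists_geom_bound (K : ℕ) {s : ℝ} (hs0 : 0 < s) (hs1 : s < 1) :
    ∃ C : ℝ, 0 ≤ C ∧ ∀ m : ℕ, ((m : ℝ) + 1) ^ K * s ^ m ≤ C := by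
  have hsum : Summable (fun j : ℕ => (j : ℝ) ^ K * s ^ j) :=
    summable_pow_mul_geometric_of_norm_lt_one K
      (by rw [Real.norm_eq_abs, abs_of_pos hs0]; exact hs1)
  have hT : 0 ≤ ∑' j : ℕ, (j : ℝ) ^ K * s ^ j :=
    tsum_nonneg fun j => by positivity
  refine ⟨s⁻¹ * ∑' j : ℕ, (j : ℝ) ^ K * s ^ j, by positivity, fun m => ?_⟩
  have hle : ((m + 1 : ℕ) : ℝ) ^ K * s ^ (m + 1) ≤ ∑' j : ℕ, (j : ℝ) ^ K * s ^ j :=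
    Summable.le_tsum hsum (m + 1) fun j _ => by positivity
  have h2 : s⁻¹ * (((m + 1 : ℕ) : ℝ) ^ K * s ^ (m + 1)) ≤
      s⁻¹ * ∑' j : ℕ, (j : ℝ) ^ K * s ^ j :=
    mul_le_mul_of_nonneg_left hle (by positivity)
  calc ((m : ℝ) + 1) ^ K * s ^ m
      = s⁻¹ * (((m + 1 : ℕ) : ℝ) ^ K * s ^ (m + 1)) := by
        push_cast
        field_simp
        ring
    _ ≤ _ := h2

section aux
variable {k : Type*} [NormedField k]

lemma norm_intCast_inv_le [CharZero k] {K : ℕ}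
    (hK : ∀ n : ℕ, 1 ≤ n → 1 ≤ ‖(n : k)‖ * (n : ℝ) ^ K)
    (n : ℤ) (hn : n ≠ 0) : ‖((n : ℤ) : k)⁻¹‖ ≤ (n.natAbs : ℝ) ^ K := by
  have h1 : ‖((n : ℤ) : k)‖ = ‖((n.natAbs : ℕ) : k)‖ := by
    rcases Int.natAbs_eq n with h | h
    · conv_lhs => rw [h]
      rw [Int.cast_natCast]
    · conv_lhs => rw [h]
      rw [Int.cast_neg, Int.cast_natCast, norm_neg]
  have hm1 : 1 ≤ n.natAbs := by omega
  have hx := hK n.natAbs hm1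
  have hpos : 0 < ‖((n.natAbs : ℕ) : k)‖ :=
    norm_pos_iff.mpr (Nat.cast_ne_zero.mpr (by omega))
  rw [norm_inv, h1]
  have h2 : ‖((n.natAbs : ℕ) : k)‖⁻¹ * 1 ≤
      ‖((n.natAbs : ℕ) : k)‖⁻¹ * (‖((n.natAbs : ℕ) : k)‖ * (n.natAbs : ℝ) ^ K) :=
    mul_le_mul_of_nonneg_left hx (inv_nonneg.mpr hpos.le)
  rwa [mul_one, ← mul_assoc, inv_mul_cancel₀ hpos.ne', one_mul] at h2

end aux

end AuxLemmas

theorem punctured_disk_first_deRham_cohomology_one_dimensional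
    (k : Type*) [NormedField k] [CharZero k]
    (hna : ∀ x y : k, ‖x + y‖ ≤ max ‖x‖ ‖y‖)
    (δ : ℝ) (hδ : 0 < δ)
    (e : ℤ → k) (he : ∀ n : ℤ, e n = if n = -1 then 1 else 0) :
    IsOvercgtOnPuncturedDisk δ e ∧
    (¬ ∃ b : ℤ → k, IsOvercgtOnPuncturedDisk δ b ∧
        ∀ n : ℤ, ((n + 1 : ℤ) : k) * b (n + 1) = e n) ∧
    (∀ a : ℤ → k, IsOvercgtOnPuncturedDisk δ a →
      ∃ (c : k) (b : ℤ → k), IsOvercgtOnPuncturedDisk δ b ∧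
        ∀ n : ℤ, a n - c * e n = ((n + 1 : ℤ) : k) * b (n + 1)) := by
  obtain ⟨K, hKspec⟩ := exists_K (k := k) hna
  refine ⟨?_, ?_, ?_⟩
  · -- (i) e is overconvergent
    refine ⟨δ + 1, by linarith, fun ρ hρ0 hρ => ⟨?_, ?_⟩⟩
    · have hEq : (fun _ : ℤ => (0 : ℝ)) =ᶠ[Filter.atTop]
          fun n : ℤ => ‖e n‖ * ρ ^ n := by
        filter_upwards [Filter.eventually_ge_atTop (0 : ℤ)] with n hn
        rw [he n, if_neg (by omega)]
        simp
      exact Filter.Tendsto.congr' hEq tendsto_const_nhds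
    · have hEq : (fun _ : ℤ => (0 : ℝ)) =ᶠ[Filter.atBot]
          fun n : ℤ => ‖e n‖ * ρ ^ n := by
        filter_upwards [Filter.eventually_le_atBot (-2 : ℤ)] with n hn
        rw [he n, if_neg (by omega)]
        simp
      exact Filter.Tendsto.congr' hEq tendsto_const_nhds
  · -- (ii) e is not a derivative
    rintro ⟨b, -, hder⟩
    have h := hder (-1)
    rw [he (-1), if_pos rfl] at h
    norm_num at h
  · -- (iii) spanning
    rintro a ⟨δ', hδδ', ha⟩
    set b : ℤ → k := fun n => if n = 0 then 0 else ((n : ℤ) : k)⁻¹ * a (n - 1) with hbdef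
    refine ⟨a (-1), b, ⟨(δ + δ') / 2, by linarith, fun ρ hρ0 hρ => ⟨?_, ?_⟩⟩, ?_⟩
    · -- atTop convergence of b at radius ρ
      set ρ' := (δ' + (δ + δ') / 2) / 2 with hρ'def
      have hρ'1 : ρ < ρ' := lt_trans hρ (by rw [hρ'def]; linarith)
      have hρ'pos : 0 < ρ' := lt_trans hρ0 hρ'1
      have hρ'δ : ρ' < δ' := by rw [hρ'def]; linarith
      set t := ρ / ρ' with htdef
      have ht0 : 0 < t := div_pos hρ0 hρ'pos
      have ht1 : t < 1 := (div_lt_one hρ'pos).mpr hρ'1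
      obtain ⟨C, hC0, hC⟩ := exists_geom_bound K ht0 ht1
      have hshift : Filter.Tendsto (fun n : ℤ => ‖a (n - 1)‖ * ρ' ^ (n - 1))
          Filter.atTop (nhds 0) := by
        have hcomp := ((ha ρ' hρ'pos hρ'δ).1).comp
          (Filter.tendsto_atTop_add_const_right Filter.atTop (-1 : ℤ) Filter.tendsto_id)
        refine hcomp.congr fun n => ?_
        simp [Function.comp, sub_eq_add_neg]
      apply squeeze_zero' (f := fun n : ℤ => ‖b n‖ * ρ ^ n)
        (g := fun n : ℤ => C * ρ * (‖a (n - 1)‖ * ρ' ^ (n - 1)))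
      · filter_upwards with n
        positivity
      · filter_upwards [Filter.eventually_ge_atTop (1 : ℤ)] with n hn
        have hn0 : n ≠ 0 := by omega
        have hb_n : b n = ((n : ℤ) : k)⁻¹ * a (n - 1) := by
          rw [hbdef]; simp [hn0]
        have hKn := norm_intCast_inv_le hKspec n hn0
        set m := (n - 1).toNat with hmdef
        have hm : (m : ℤ) = n - 1 := Int.toNat_of_nonneg (by omega)
        have hnm : (n.natAbs : ℝ) = (m : ℝ) + 1 := by
          have : (n.natAbs : ℤ) = (m : ℤ) + 1 := by omega
          exact_mod_cast this
        have hpow : t ^ m * ρ' ^ (n - 1) * ρ = ρ ^ n := by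
          have h2 : t ^ ((n : ℤ) - 1) = ρ ^ ((n : ℤ) - 1) / ρ' ^ ((n : ℤ) - 1) :=
            div_zpow ρ ρ' (n - 1)
          rw [← zpow_natCast t m, hm, h2,
            div_mul_cancel₀ _ (zpow_ne_zero _ hρ'pos.ne'),
            zpow_sub_one₀ hρ0.ne', mul_assoc, inv_mul_cancel₀ hρ0.ne', mul_one]
        calc ‖b n‖ * ρ ^ n
            = (‖((n : ℤ) : k)⁻¹‖ * t ^ m) * (‖a (n - 1)‖ * (ρ' ^ (n - 1) * ρ)) := by
              rw [hb_n, norm_mul, ← hpow]; ring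
          _ ≤ C * (‖a (n - 1)‖ * (ρ' ^ (n - 1) * ρ)) := by
              apply mul_le_mul_of_nonneg_right _ (by positivity)
              calc ‖((n : ℤ) : k)⁻¹‖ * t ^ m ≤ ((m : ℝ) + 1) ^ K * t ^ m := by
                    apply mul_le_mul_of_nonneg_right _ (by positivity)
                    rw [← hnm]; exact hKn
                _ ≤ C := hC m
          _ = C * ρ * (‖a (n - 1)‖ * ρ' ^ (n - 1)) := by ring
      · simpa using hshift.const_mul (C * ρ)
    · -- atBot convergence of b at radius ρ
      set ρ₂ := ρ / 2 with hρ₂def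
      have hρ₂pos : 0 < ρ₂ := by rw [hρ₂def]; linarith
      have hρ₂δ : ρ₂ < δ' := by rw [hρ₂def]; linarith
      obtain ⟨C, hC0, hC⟩ := exists_geom_bound K (s := (1/2 : ℝ)) (by norm_num) (by norm_num)
      have hshift : Filter.Tendsto (fun n : ℤ => ‖a (n - 1)‖ * ρ₂ ^ (n - 1))
          Filter.atBot (nhds 0) := by
        have hcomp := ((ha ρ₂ hρ₂pos hρ₂δ).2).comp
          (Filter.tendsto_atBot_add_const_right Filter.atBot (-1 : ℤ) Filter.tendsto_id)
        refine hcomp.congr fun n => ?_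
        simp [Function.comp, sub_eq_add_neg]
      apply squeeze_zero' (f := fun n : ℤ => ‖b n‖ * ρ ^ n)
        (g := fun n : ℤ => C * ρ₂ * (‖a (n - 1)‖ * ρ₂ ^ (n - 1)))
      · filter_upwards with n
        positivity
      · filter_upwards [Filter.eventually_le_atBot (-1 : ℤ)] with n hn
        have hn0 : n ≠ 0 := by omega
        have hb_n : b n = ((n : ℤ) : k)⁻¹ * a (n - 1) := by
          rw [hbdef]; simp [hn0]
        have hKn := norm_intCast_inv_le hKspec n hn0
        set m := (-n).toNat with hmdef
        have hm : (m : ℤ) = -n := Int.toNat_of_nonneg (by omega)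
        have hnm : (n.natAbs : ℝ) = (m : ℝ) := by
          have : (n.natAbs : ℤ) = (m : ℤ) := by omega
          exact_mod_cast this
        have hpow : (1/2 : ℝ) ^ m * ρ₂ ^ (n - 1) * ρ₂ = ρ ^ n := by
          have hρeq : ρ = 2 * ρ₂ := by rw [hρ₂def]; ring
          have h2 : ((1:ℝ)/2) ^ m = (2 : ℝ) ^ (n : ℤ) := by
            rw [one_div, inv_pow, ← zpow_natCast (2:ℝ) m, ← zpow_neg, hm, neg_neg]
          rw [h2, hρeq, mul_zpow, zpow_sub_one₀ hρ₂pos.ne', mul_assoc, mul_assoc,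
            inv_mul_cancel₀ hρ₂pos.ne', mul_one]
        calc ‖b n‖ * ρ ^ n
            = (‖((n : ℤ) : k)⁻¹‖ * (1/2 : ℝ) ^ m) * (‖a (n - 1)‖ * (ρ₂ ^ (n - 1) * ρ₂)) := by
              rw [hb_n, norm_mul, ← hpow]; ring
          _ ≤ C * (‖a (n - 1)‖ * (ρ₂ ^ (n - 1) * ρ₂)) := by
              apply mul_le_mul_of_nonneg_right _ (by positivity)
              calc ‖((n : ℤ) : k)⁻¹‖ * (1/2 : ℝ) ^ m
                  ≤ ((m : ℝ) + 1) ^ K * (1/2 : ℝ) ^ m := by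
                    apply mul_le_mul_of_nonneg_right _ (by positivity)
                    refine hKn.trans ?_
                    rw [hnm]
                    exact pow_le_pow_left₀ (by positivity) (by linarith) K
                _ ≤ C := hC m
          _ = C * ρ₂ * (‖a (n - 1)‖ * ρ₂ ^ (n - 1)) := by ring
      · simpa using hshift.const_mul (C * ρ₂)
    · -- the identity a - c e = b'
      intro n
      rw [he n]
      by_cases hn : n = -1
      · subst hn
        norm_num
      · rw [if_neg hn]
        have h1 : n + 1 ≠ 0 := by omega
        have h2 : ((n + 1 : ℤ) : k) ≠ 0 := Int.cast_ne_zero.mpr h1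
        have hb1 : b (n + 1) = ((n + 1 : ℤ) : k)⁻¹ * a (n + 1 - 1) := by
          simp only [hbdef]
          rw [if_neg h1]
        rw [hb1, add_sub_cancel_right, ← mul_assoc, mul_inv_cancel₀ h2, one_mul,
          mul_zero, sub_zero]
end

section
/- Let k be a field of characteristic 0 equipped with a multiplicative nonarchimedean norm, and let δ > 0 be a real number. Every sequence a : ℤ → k that is overconvergent on the punctured disk of radius δ is also overconvergent on the circle of radius δ, so there is an inclusion B ⊆ A of the space B of punctured-disk-overconvergent sequences into the space A of circle-overconvergent sequences, carrying derivatives of elements of B into derivatives of elements of A. The induced k-linear map on quotients B / {derivatives of elements of B} → A / {derivatives of elements of A} is bijective. (The restriction map from the overconvergent punctured disk of radius δ to the dagger annulus at radius δ induces an isomorphism in first de Rham cohomology — the 'simple computation of both sides' concluding the proof of the homotopy invariance Proposition.) -/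
/-!
STATEMENT 8: Over a nonarchimedean normed field `k` of characteristic zero, every
Laurent series overconvergent on the punctured disk of radius `δ` is overconvergent
on the circle of radius `δ` (inclusion `B ⊆ A`), and the induced `k`-linear map on
the quotients by derivatives, `B / D_B → A / D_A`, is bijective.  Injectivity: an
element of `B` which is the derivative of an element of `A` is the derivative of an
element of `B`.  Surjectivity: every element of `A` differs from an element of `B`
by the derivative of an element of `A`.  The derivative of `b` is the sequence
`n ↦ (n+1) b_{n+1}`.
-/

/-- `a : ℤ → k` is overconvergent on the circle of radius `δ`. -/
def IsOvercgtOnCircle {k : Type*} [NormedField k] (δ : ℝ) (a : ℤ → k) : Prop :=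
  ∃ ρ₁ ρ₂ : ℝ, 0 < ρ₁ ∧ ρ₁ < δ ∧ δ < ρ₂ ∧
    Filter.Tendsto (fun n : ℤ => ‖a n‖ * ρ₂ ^ n) Filter.atTop (nhds 0) ∧
    Filter.Tendsto (fun n : ℤ => ‖a n‖ * ρ₁ ^ n) Filter.atBot (nhds 0)

open Filter

section NormBounds
variable {k : Type*} [NormedField k] [CharZero k]

lemma aux_nat_norm_le_one (hna : ∀ x y : k, ‖x + y‖ ≤ max ‖x‖ ‖y‖) (n : ℕ) :
    ‖(n : k)‖ ≤ 1 := by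
  induction n with
  | zero => simp
  | succ n ih =>
    push_cast
    refine le_trans (hna _ _) ?_
    simp [ih]

lemma aux_int_norm_le_one (hna : ∀ x y : k, ‖x + y‖ ≤ max ‖x‖ ‖y‖) (m : ℤ) :
    ‖(m : k)‖ ≤ 1 := by
  rcases Int.natAbs_eq m with h | h
  · rw [h, Int.cast_natCast]
    exact aux_nat_norm_le_one hna _
  · rw [h, Int.cast_neg, norm_neg, Int.cast_natCast]
    exact aux_nat_norm_le_one hna _

lemma aux_unique_bad_prime (hna : ∀ x y : k, ‖x + y‖ ≤ max ‖x‖ ‖y‖)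
    {p q : ℕ} (hp : p.Prime) (hq : q.Prime) (hpq : p ≠ q)
    (h1 : ‖(p : k)‖ < 1) (h2 : ‖(q : k)‖ < 1) : False := by
  have hcop : IsCoprime (p : ℤ) (q : ℤ) :=
    Nat.isCoprime_iff_coprime.mpr ((Nat.coprime_primes hp hq).mpr hpq)
  obtain ⟨a, b, hab⟩ := hcop
  have h1' : ‖(a : k) * (p : k)‖ < 1 := by
    rw [norm_mul]
    calc ‖(a : k)‖ * ‖(p : k)‖ ≤ 1 * ‖(p : k)‖ :=
          mul_le_mul_of_nonneg_right (aux_int_norm_le_one hna a) (norm_nonneg _)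
      _ = ‖(p : k)‖ := one_mul _
      _ < 1 := h1
  have h2' : ‖(b : k) * (q : k)‖ < 1 := by
    rw [norm_mul]
    calc ‖(b : k)‖ * ‖(q : k)‖ ≤ 1 * ‖(q : k)‖ :=
          mul_le_mul_of_nonneg_right (aux_int_norm_le_one hna b) (norm_nonneg _)
      _ = ‖(q : k)‖ := one_mul _
      _ < 1 := h2
  have : ((a * p + b * q : ℤ) : k) = 1 := by rw [hab]; norm_cast
  have hone : ‖(a : k) * (p : k) + (b : k) * (q : k)‖ = 1 := by
    push_cast at this
    rw [this, norm_one]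
  have := hna ((a : k) * (p : k)) ((b : k) * (q : k))
  rw [hone] at this
  rcases max_cases ‖(a : k) * (p : k)‖ ‖(b : k) * (q : k)‖ with ⟨h, _⟩ | ⟨h, _⟩ <;>
    rw [h] at this <;> linarith

lemma aux_exists_K (hna : ∀ x y : k, ‖x + y‖ ≤ max ‖x‖ ‖y‖) :
    ∃ K : ℕ, 1 ≤ K ∧ ∀ m : ℤ, m ≠ 0 → ‖(m : k)‖⁻¹ ≤ |(m : ℝ)| ^ K := by
  -- first get a K with the ℕ bound
  suffices h : ∃ K : ℕ, 1 ≤ K ∧ ∀ n : ℕ, n ≠ 0 → 1 ≤ ‖(n : k)‖ * (n : ℝ) ^ K by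
    obtain ⟨K, hK1, hK⟩ := h
    refine ⟨K, hK1, fun m hm => ?_⟩
    have hmk : (m : k) ≠ 0 := Int.cast_ne_zero.mpr hm
    have hpos : 0 < ‖(m : k)‖ := norm_pos_iff.mpr hmk
    have hnorm : ‖(m : k)‖ = ‖((m.natAbs : ℕ) : k)‖ := by
      rcases Int.natAbs_eq m with h' | h'
      · nth_rewrite 1 [h']
        rw [Int.cast_natCast]
      · nth_rewrite 1 [h']
        rw [Int.cast_neg, norm_neg, Int.cast_natCast]
    have habs : ((m.natAbs : ℕ) : ℝ) = |(m : ℝ)| := by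
      rw [Nat.cast_natAbs, Int.cast_abs]
    have hna0 : m.natAbs ≠ 0 := Int.natAbs_ne_zero.mpr hm
    have := hK m.natAbs hna0
    rw [← hnorm, habs] at this
    rw [inv_le_iff_one_le_mul₀ hpos]
    linarith [this]
  by_cases hbad : ∃ p : ℕ, p.Prime ∧ ‖(p : k)‖ < 1
  · obtain ⟨p, hp, hplt⟩ := hbad
    have hp0 : (0 : ℝ) < ‖(p : k)‖ := by
      refine norm_pos_iff.mpr ?_
      exact_mod_cast Nat.cast_ne_zero.mpr hp.ne_zero
    have hinv : ((p : ℝ))⁻¹ < 1 := by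
      rw [inv_lt_one_iff₀]
      right
      exact_mod_cast hp.one_lt
    have hpr : (0:ℝ) < (p : ℝ) := by exact_mod_cast hp.pos
    obtain ⟨K0, hK0⟩ := exists_pow_lt_of_lt_one hp0 hinv
    set K := max K0 1 with hKdef
    refine ⟨K, le_max_right _ _, ?_⟩
    have hpK : 1 ≤ ‖(p : k)‖ * (p : ℝ) ^ K := by
      have h1 : ((p:ℝ))⁻¹ ^ K ≤ ((p:ℝ))⁻¹ ^ K0 :=
        pow_le_pow_of_le_one (by positivity) hinv.le (le_max_left _ _)
      have h2 : ((p:ℝ))⁻¹ ^ K ≤ ‖(p : k)‖ := le_of_lt (lt_of_le_of_lt h1 hK0)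
      have h3 : ((p:ℝ))⁻¹ ^ K * (p:ℝ) ^ K = 1 := by
        rw [← mul_pow, inv_mul_cancel₀ hpr.ne', one_pow]
      calc (1:ℝ) = ((p:ℝ))⁻¹ ^ K * (p:ℝ) ^ K := h3.symm
        _ ≤ ‖(p : k)‖ * (p : ℝ) ^ K :=
          mul_le_mul_of_nonneg_right h2 (by positivity)
    intro n hn
    induction n using Nat.recOnMul with
    | zero => exact absurd rfl hn
    | one => simp
    | prime q hq =>
      by_cases hqp : q = p
      · rw [hqp]; exact hpK
      · have hq1 : ‖(q : k)‖ = 1 := by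
          refine le_antisymm (aux_nat_norm_le_one hna q) ?_
          by_contra hlt
          push_neg at hlt
          exact aux_unique_bad_prime hna hq hp hqp hlt hplt
        rw [hq1, one_mul]
        have : (1:ℝ) ≤ (q:ℝ) := by exact_mod_cast hq.pos
        exact one_le_pow₀ this
    | mul a b iha ihb =>
      have ha0 : a ≠ 0 := by rintro rfl; simp at hn
      have hb0 : b ≠ 0 := by rintro rfl; simp at hn
      have := mul_le_mul (iha ha0) (ihb hb0) zero_le_one
        (by positivity)
      rw [one_mul] at this
      calc (1:ℝ) ≤ (‖(a : k)‖ * (a : ℝ) ^ K) * (‖(b : k)‖ * (b : ℝ) ^ K) := this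
        _ = ‖((a * b : ℕ) : k)‖ * ((a * b : ℕ) : ℝ) ^ K := by
          push_cast [norm_mul]; ring
  · push_neg at hbad
    refine ⟨1, le_refl 1, ?_⟩
    intro n hn
    induction n using Nat.recOnMul with
    | zero => exact absurd rfl hn
    | one => simp
    | prime q hq =>
      have hq1 : ‖(q : k)‖ = 1 :=
        le_antisymm (aux_nat_norm_le_one hna q) (hbad q hq)
      rw [hq1, one_mul, pow_one]
      exact_mod_cast hq.pos
    | mul a b iha ihb =>
      have ha0 : a ≠ 0 := by rintro rfl; simp at hn
      have hb0 : b ≠ 0 := by rintro rfl; simp at hn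
      have := mul_le_mul (iha ha0) (ihb hb0) zero_le_one (by positivity)
      rw [one_mul] at this
      calc (1:ℝ) ≤ (‖(a : k)‖ * (a : ℝ) ^ 1) * (‖(b : k)‖ * (b : ℝ) ^ 1) := this
        _ = ‖((a * b : ℕ) : k)‖ * ((a * b : ℕ) : ℝ) ^ 1 := by
          push_cast [norm_mul]; ring

end NormBounds

section Analytic

lemma aux_polyZ_top (K : ℕ) {r : ℝ} (h0 : 0 ≤ r) (h1 : r < 1) :
    Tendsto (fun n : ℤ => |(n : ℝ)| ^ K * r ^ n) atTop (nhds 0) := by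
  have h := tendsto_pow_const_mul_const_pow_of_lt_one K h0 h1
  rw [← Nat.map_cast_int_atTop, tendsto_map'_iff]
  refine h.congr fun n => ?_
  simp only [Function.comp]
  rw [zpow_natCast]
  norm_num [abs_of_nonneg]

lemma aux_polyZ_bot (K : ℕ) {r : ℝ} (h1 : 1 < r) :
    Tendsto (fun n : ℤ => |(n : ℝ)| ^ K * r ^ n) atBot (nhds 0) := by
  have hr0 : (0:ℝ) < r := lt_trans one_pos h1
  have h := aux_polyZ_top K (inv_nonneg.mpr hr0.le) (inv_lt_one_of_one_lt₀ h1)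
  rw [← Filter.map_neg_atTop, tendsto_map'_iff]
  refine h.congr fun n => ?_
  simp only [Function.comp]
  rw [Int.cast_neg, abs_neg, zpow_neg, ← inv_zpow]

variable {k : Type*} [NormedField k]

lemma aux_shift_top {b b' : ℤ → k} {K : ℕ}
    (hb' : ∀ m : ℤ, ‖b' m‖ ≤ ‖b (m - 1)‖ * |(m : ℝ)| ^ K)
    {ρ ρ' : ℝ} (h0 : 0 < ρ) (hlt : ρ < ρ')
    (hb : Tendsto (fun n : ℤ => ‖b n‖ * ρ' ^ n) atTop (nhds 0)) :
    Tendsto (fun n : ℤ => ‖b' n‖ * ρ ^ n) atTop (nhds 0) := by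
  have hρ' : 0 < ρ' := h0.trans hlt
  have hshift : Tendsto (fun n : ℤ => ‖b (n - 1)‖ * ρ' ^ (n - 1)) atTop (nhds 0) := by
    refine hb.comp ?_
    simpa [sub_eq_add_neg] using tendsto_atTop_add_const_right atTop (-1 : ℤ) tendsto_id
  have hpoly : Tendsto (fun n : ℤ => |(n : ℝ)| ^ K * (ρ / ρ') ^ n * ρ') atTop (nhds 0) := by
    have := (aux_polyZ_top K (div_nonneg h0.le hρ'.le)
      ((div_lt_one hρ').mpr hlt)).mul_const ρ'
    simpa using this
  have hF := hshift.mul hpoly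
  rw [mul_zero] at hF
  refine squeeze_zero (fun n => mul_nonneg (norm_nonneg _) (zpow_pos h0 n).le)
    (fun n => ?_) hF
  have hco : (‖b (n - 1)‖ * |(n : ℝ)| ^ K) * ρ ^ n =
      ‖b (n - 1)‖ * ρ' ^ (n - 1) * (|(n : ℝ)| ^ K * (ρ / ρ') ^ n * ρ') := by
    rw [zpow_sub_one₀ hρ'.ne', div_zpow]
    have hρ'n : ρ' ^ n ≠ 0 := (zpow_pos hρ' n).ne'
    field_simp
  rw [← hco]
  exact mul_le_mul_of_nonneg_right (hb' n) (zpow_pos h0 n).le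

lemma aux_shift_bot {b b' : ℤ → k} {K : ℕ}
    (hb' : ∀ m : ℤ, ‖b' m‖ ≤ ‖b (m - 1)‖ * |(m : ℝ)| ^ K)
    {ρ ρ' : ℝ} (h0 : 0 < ρ') (hlt : ρ' < ρ)
    (hb : Tendsto (fun n : ℤ => ‖b n‖ * ρ' ^ n) atBot (nhds 0)) :
    Tendsto (fun n : ℤ => ‖b' n‖ * ρ ^ n) atBot (nhds 0) := by
  have hρ : 0 < ρ := h0.trans hlt
  have hshift : Tendsto (fun n : ℤ => ‖b (n - 1)‖ * ρ' ^ (n - 1)) atBot (nhds 0) := by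
    refine hb.comp ?_
    simpa [sub_eq_add_neg] using tendsto_atBot_add_const_right atBot (-1 : ℤ) tendsto_id
  have hpoly : Tendsto (fun n : ℤ => |(n : ℝ)| ^ K * (ρ / ρ') ^ n * ρ') atBot (nhds 0) := by
    have := (aux_polyZ_bot K ((one_lt_div h0).mpr hlt)).mul_const ρ'
    simpa using this
  have hF := hshift.mul hpoly
  rw [mul_zero] at hF
  refine squeeze_zero (fun n => mul_nonneg (norm_nonneg _) (zpow_pos hρ n).le)
    (fun n => ?_) hF
  have hco : (‖b (n - 1)‖ * |(n : ℝ)| ^ K) * ρ ^ n =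
      ‖b (n - 1)‖ * ρ' ^ (n - 1) * (|(n : ℝ)| ^ K * (ρ / ρ') ^ n * ρ') := by
    rw [zpow_sub_one₀ h0.ne', div_zpow]
    have hρ'n : ρ' ^ n ≠ 0 := (zpow_pos h0 n).ne'
    field_simp
  rw [← hco]
  exact mul_le_mul_of_nonneg_right (hb' n) (zpow_pos hρ n).le

end Analytic

lemma aux_div_bound {k : Type*} [NormedField k] [CharZero k] {K : ℕ} (hK1 : 1 ≤ K)
    (hK : ∀ m : ℤ, m ≠ 0 → ‖(m : k)‖⁻¹ ≤ |(m : ℝ)| ^ K) (c : ℤ → k) (m : ℤ) :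
    ‖(if m = 0 then 0 else c (m - 1) / (m : k))‖ ≤ ‖c (m - 1)‖ * |(m : ℝ)| ^ K := by
  by_cases hm : m = 0
  · subst hm
    simp [zero_pow (by omega : K ≠ 0)]
  · rw [if_neg hm, norm_div, div_eq_mul_inv]
    exact mul_le_mul_of_nonneg_left (hK m hm) (norm_nonneg _)


theorem punctured_disk_to_annulus_iso_on_first_deRham_cohomology
    (k : Type*) [NormedField k] [CharZero k]
    (hna : ∀ x y : k, ‖x + y‖ ≤ max ‖x‖ ‖y‖)
    (δ : ℝ) (hδ : 0 < δ) :
    -- the inclusion B ⊆ A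
    (∀ a : ℤ → k, IsOvercgtOnPuncturedDisk δ a → IsOvercgtOnCircle δ a) ∧
    -- injectivity of the induced map on quotients
    (∀ b : ℤ → k, IsOvercgtOnPuncturedDisk δ b →
      (∃ a : ℤ → k, IsOvercgtOnCircle δ a ∧
        ∀ n : ℤ, ((n + 1 : ℤ) : k) * a (n + 1) = b n) →
      (∃ b' : ℤ → k, IsOvercgtOnPuncturedDisk δ b' ∧
        ∀ n : ℤ, ((n + 1 : ℤ) : k) * b' (n + 1) = b n)) ∧
    -- surjectivity of the induced map on quotients
    (∀ a : ℤ → k, IsOvercgtOnCircle δ a →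
      ∃ b : ℤ → k, IsOvercgtOnPuncturedDisk δ b ∧
        ∃ a' : ℤ → k, IsOvercgtOnCircle δ a' ∧
          ∀ n : ℤ, a n - b n = ((n + 1 : ℤ) : k) * a' (n + 1)) := by
  obtain ⟨K, hK1, hK⟩ := aux_exists_K (k := k) hna
  refine ⟨?_, ?_, ?_⟩
  · rintro a ⟨δ', hδ', h⟩
    exact ⟨δ / 2, (δ + δ') / 2, by linarith, by linarith, by linarith,
      (h _ (by linarith) (by linarith)).1, (h _ (by linarith) (by linarith)).2⟩
  · rintro b ⟨δ', hδ', h⟩ ⟨a, _, hda⟩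
    have hbm1 : b (-1) = 0 := by simpa using (hda (-1)).symm
    have hbd := aux_div_bound hK1 hK b
    refine ⟨fun m => if m = 0 then 0 else b (m - 1) / (m : k),
      ⟨(δ + δ') / 2, by linarith, fun ρ hρ0 hρ => ?_⟩, fun n => ?_⟩
    · constructor
      · exact aux_shift_top hbd hρ0 (show ρ < (ρ + δ') / 2 by linarith)
          (h _ (by linarith) (by linarith)).1
      · exact aux_shift_bot hbd (show (0:ℝ) < ρ / 2 by linarith) (by linarith)
          (h (ρ / 2) (by linarith) (by linarith)).2
    · by_cases hn : n = -1
      · subst hn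
        simp [hbm1]
      · have hne : n + 1 ≠ 0 := by omega
        have hcast : ((n + 1 : ℤ) : k) ≠ 0 := Int.cast_ne_zero.mpr hne
        simp only [if_neg hne]
        rw [show n + 1 - 1 = n by ring, mul_div_cancel₀ _ hcast]
  · rintro a ⟨ρ₁, ρ₂, h1, h2, h3, htop, hbot⟩
    have hbd := aux_div_bound hK1 hK a
    refine ⟨fun n => if n = -1 then a (-1) else 0,
      ⟨δ + 1, by linarith, fun ρ hρ0 hρ => ⟨?_, ?_⟩⟩,
      fun m => if m = 0 then 0 else a (m - 1) / (m : k),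
      ⟨(ρ₁ + δ) / 2, (δ + ρ₂) / 2, by linarith, by linarith, by linarith,
        aux_shift_top hbd (by linarith) (by linarith) htop,
        aux_shift_bot hbd h1 (by linarith) hbot⟩, fun n => ?_⟩
    · refine Tendsto.congr' ?_ tendsto_const_nhds
      filter_upwards [eventually_ge_atTop (0 : ℤ)] with n hn
      have hn' : n ≠ -1 := by omega
      simp [hn']
    · refine Tendsto.congr' ?_ tendsto_const_nhds
      filter_upwards [eventually_le_atBot (-2 : ℤ)] with n hn
      have hn' : n ≠ -1 := by omega
      simp [hn']
    · by_cases hn : n = -1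
      · subst hn
        simp
      · have hne : n + 1 ≠ 0 := by omega
        have hcast : ((n + 1 : ℤ) : k) ≠ 0 := Int.cast_ne_zero.mpr hne
        simp only [if_neg hn, if_neg hne]
        rw [show n + 1 - 1 = n by ring, mul_div_cancel₀ _ hcast, sub_zero]
end
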